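/- arXiv:1904.06638 — 2 statements merged into one kernel-verified Lean document; each statement's English description precedes it below -/
import Mathlib

section
/- 𝐈ℕ∞ is an F-inverse semigroup: for every α ∈ 𝐈ℕ∞ the 𝔠_mg-equivalence class of α contains a greatest element with respect to the natural partial order ≼, namely the unique maximal-domain partial isometry α_m with the same translation integer z_α (explicitly: if z_α < 0 then α_m has domain { n ∈ ℕ : n ≥ −z_α + 1 } and range ℕ; if z_α = 0 then α_m = 𝕀; if z_α > 0 then α_m has domain ℕ and range { n ∈ ℕ : n ≥ z_α + 1 }; in each case α_m(n) = n + z_α). -/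
/-- Partial transformations of the set ℕ of positive integers. -/
abbrev PMapN : Type := ℕ+ → Option ℕ+

/-- The domain of a partial transformation. -/
def pdom (f : PMapN) : Set ℕ+ := {n | f n ≠ none}

/-- The range of a partial transformation. -/
def pran (f : PMapN) : Set ℕ+ := {m | ∃ n, f n = some m}

/-- Composition of partial transformations: `pmul f g` applies `g` first and then `f`. -/
def pmul (f g : PMapN) : PMapN := fun n => (g n).bind f

/-- The identity transformation 𝕀 of ℕ. -/
def pid : PMapN := fun n => some n

/-- `f` is a partial bijection (an injective partial map). -/
def IsPartialBij (f : PMapN) : Prop :=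
  ∀ ⦃m n a⦄, f m = some a → f n = some a → m = n

/-- `f` is a partial isometry with respect to the metric `d(m, n) = |m - n|`. -/
def IsIsometry (f : PMapN) : Prop :=
  ∀ ⦃m n a b⦄, f m = some a → f n = some b →
    |((a : ℕ) : ℤ) - ((b : ℕ) : ℤ)| = |((m : ℕ) : ℤ) - ((n : ℕ) : ℤ)|

/-- Membership in the inverse monoid `𝐈ℕ∞` of partial cofinite isometries of ℕ:
a partial bijection of ℕ with cofinite domain and cofinite range preserving distances. -/
def InIN (f : PMapN) : Prop :=
  IsPartialBij f ∧ (pdom f)ᶜ.Finite ∧ (pran f)ᶜ.Finite ∧ IsIsometry f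

/-- The least group congruence `𝔠_mg` on the inverse semigroup `𝐈ℕ∞`:
`a 𝔠_mg b` iff `ea = eb` for some idempotent `e ∈ 𝐈ℕ∞`. -/
def Cmg (a b : PMapN) : Prop :=
  ∃ e, InIN e ∧ pmul e e = e ∧ pmul e a = pmul e b

/-- The natural partial order on the inverse semigroup `𝐈ℕ∞`:
`a ≼ b` iff `a = be` for some idempotent `e ∈ 𝐈ℕ∞`. -/
def NatLe (a b : PMapN) : Prop :=
  ∃ e, InIN e ∧ pmul e e = e ∧ a = pmul b e

/-- The partial translation `n ↦ n + z` of ℕ with the maximal possible domain: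
all `n` with `n + z ≥ 1`. -/
noncomputable def maxShift (z : ℤ) : PMapN := fun n =>
  if h : 1 ≤ ((n : ℕ) : ℤ) + z then some ⟨(((n : ℕ) : ℤ) + z).toNat, by omega⟩ else none

/-! Idempotents of `𝐈ℕ∞` are identities of cofinite sets, so `𝔠_mg`-equivalent elements agree
on a cofinite, hence infinite, set. A partial isometry that translates two distinct points by `z`
translates every point of its domain by `z`, so each `β` in the class of `α` is `maxShift z`
restricted to `dom β`, i.e. `β ≼ maxShift z`. And `α`, `maxShift z` become equal after composing
with the identity of `ran α`. -/

def HasShift (f : PMapN) (z : ℤ) : Prop :=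
  ∀ n a, f n = some a → ((a : ℕ) : ℤ) = ((n : ℕ) : ℤ) + z

lemma finite_setOf_coe_le (k : ℤ) : {n : ℕ+ | ((n : ℕ) : ℤ) ≤ k}.Finite :=
  ((Set.finite_Iic k.toNat).preimage PNat.coe_injective.injOn).subset fun n hn => by
    change ((n : ℕ) : ℤ) ≤ k at hn
    change (n : ℕ) ≤ k.toNat
    omega

section PartialIdentity

open Classical in
noncomputable def pidOn (E : Set ℕ+) : PMapN := fun n => if n ∈ E then some n else none

variable {E : Set ℕ+} {n m : ℕ+}

lemma pidOn_eq_some : pidOn E n = some m ↔ n ∈ E ∧ m = n := by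
  unfold pidOn
  split_ifs with h <;> simp [h, eq_comm]

lemma pidOn_of_mem (h : n ∈ E) : pidOn E n = some n := pidOn_eq_some.2 ⟨h, rfl⟩

lemma pidOn_of_notMem (h : n ∉ E) : pidOn E n = none := by simp [pidOn, h]

lemma pmul_pidOn_self (E : Set ℕ+) : pmul (pidOn E) (pidOn E) = pidOn E := by
  funext n
  by_cases h : n ∈ E <;> simp [pmul, pidOn_of_mem, pidOn_of_notMem, h]

lemma pdom_pidOn (E : Set ℕ+) : pdom (pidOn E) = E := by
  ext n
  by_cases h : n ∈ E <;> simp [pdom, pidOn_of_mem, pidOn_of_notMem, h]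

lemma pran_pidOn (E : Set ℕ+) : pran (pidOn E) = E := by
  ext m
  simp [pran, pidOn_eq_some]

lemma inIN_pidOn (h : Eᶜ.Finite) : InIN (pidOn E) := by
  refine ⟨fun m n a hm hn => ?_, by rwa [pdom_pidOn], by rwa [pran_pidOn],
    fun m n a b hm hn => ?_⟩
  · rw [← (pidOn_eq_some.1 hm).2, (pidOn_eq_some.1 hn).2]
  · rw [(pidOn_eq_some.1 hm).2, (pidOn_eq_some.1 hn).2]

lemma pmul_pidOn_pran (f : PMapN) : pmul (pidOn (pran f)) f = f := by
  funext n
  cases h : f n with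
  | none => simp [pmul, h]
  | some a => simp [pmul, h, pidOn_of_mem (show a ∈ pran f from ⟨n, h⟩)]

end PartialIdentity

section Idempotent

variable {e : PMapN} (he : IsPartialBij e) (hee : pmul e e = e)
include he hee

lemma IsPartialBij.eq_of_idempotent {n m : ℕ+} (h : e n = some m) : m = n := by
  have hm : e m = some m := by simpa [pmul, h] using congrFun hee n
  exact he hm h

lemma IsPartialBij.apply_eq_of_pmul_eq {α β : PMapN} (heq : pmul e α = pmul e β) {n a : ℕ+}
    (hα : α n = some a) (ha : a ∈ pdom e) : β n = some a := by
  obtain ⟨a', ha'⟩ := Option.ne_none_iff_exists'.mp ha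
  obtain rfl := he.eq_of_idempotent hee ha'
  have h := congrFun heq n
  simp only [pmul, hα, Option.bind_some, ha'] at h
  cases hb : β n with
  | none => simp [hb] at h
  | some b =>
    rw [hb, Option.bind_some] at h
    rw [he.eq_of_idempotent hee h.symm]

end Idempotent

lemma IsPartialBij.finite_preimage {f : PMapN} (hf : IsPartialBij f) {s : Set ℕ+}
    (hs : s.Finite) : {n | ∃ a ∈ s, f n = some a}.Finite :=
  Set.Finite.of_injOn (t := some '' s) (fun _ ⟨a, ha, hn⟩ => ⟨a, ha, hn.symm⟩)
    (fun _ ⟨_, _, hm⟩ _ _ hmn => hf hm (hmn ▸ hm)) (hs.image _)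

lemma Cmg.compl_setOf_agree_finite {α β : PMapN} (hα : InIN α) (h : Cmg α β) :
    {n | ∃ a, α n = some a ∧ β n = some a}ᶜ.Finite := by
  obtain ⟨e, he, hee, heq⟩ := h
  refine (hα.2.1.union (hα.1.finite_preimage he.2.1)).subset fun n hn => ?_
  cases hαn : α n with
  | none => exact Or.inl fun h => h hαn
  | some a =>
    exact Or.inr ⟨a, fun ha => hn ⟨a, hαn, he.1.apply_eq_of_pmul_eq hee heq hαn ha⟩, hαn⟩

/-- The image `b` of `n` satisfies `|b - z - mᵢ| = |n - mᵢ|` for two distinct `mᵢ ∈ S`;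
a solution `b - z ≠ n` would be the reflection of `n` in both `m₁` and `m₂`. -/
lemma IsIsometry.hasShift_of_nontrivial {f : PMapN} {z : ℤ} (hf : IsIsometry f) {S : Set ℕ+}
    (hS : S.Nontrivial)
    (hSf : ∀ n ∈ S, ∃ a, f n = some a ∧ ((a : ℕ) : ℤ) = ((n : ℕ) : ℤ) + z) :
    HasShift f z := by
  intro n b hb
  obtain ⟨m₁, hm₁, m₂, hm₂, hne⟩ := hS
  obtain ⟨c₁, hc₁, hc₁z⟩ := hSf m₁ hm₁
  obtain ⟨c₂, hc₂, hc₂z⟩ := hSf m₂ hm₂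
  have hne' : (m₁ : ℕ) ≠ m₂ := PNat.coe_injective.ne hne
  have d₁ := abs_eq_abs.mp (hf hb hc₁)
  have d₂ := abs_eq_abs.mp (hf hb hc₂)
  omega

section MaxShift

variable {z : ℤ} {n a : ℕ+}

lemma maxShift_eq_some : maxShift z n = some a ↔ ((a : ℕ) : ℤ) = ((n : ℕ) : ℤ) + z := by
  have ha := a.pos
  by_cases h : 1 ≤ ((n : ℕ) : ℤ) + z
  · rw [maxShift, dif_pos h]
    refine (Option.some_injective _).eq_iff.trans (PNat.coe_inj.symm.trans ?_)
    change (((n : ℕ) : ℤ) + z).toNat = (a : ℕ) ↔ _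
    omega
  · rw [maxShift, dif_neg h]
    simp only [reduceCtorEq, false_iff]
    omega

lemma hasShift_maxShift (z : ℤ) : HasShift (maxShift z) z := fun _ _ => maxShift_eq_some.1

lemma HasShift.maxShift_eq {f : PMapN} (h : HasShift f z) (hf : f n = some a) :
    maxShift z n = some a :=
  maxShift_eq_some.2 (h n a hf)

lemma mem_pdom_maxShift : n ∈ pdom (maxShift z) ↔ 1 ≤ ((n : ℕ) : ℤ) + z := by
  show maxShift z n ≠ none ↔ _
  unfold maxShift
  split_ifs with h <;> simp [h]

lemma mem_pran_maxShift {m : ℕ+} : m ∈ pran (maxShift z) ↔ 1 ≤ ((m : ℕ) : ℤ) - z := by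
  have hm := m.pos
  constructor
  · rintro ⟨n, hn⟩
    have := maxShift_eq_some.1 hn
    have := n.pos
    omega
  · intro h
    refine ⟨⟨(((m : ℕ) : ℤ) - z).toNat, by omega⟩, maxShift_eq_some.2 ?_⟩
    simp only [PNat.mk_coe]
    omega

lemma maxShift_zero : maxShift 0 = pid :=
  funext fun _ => maxShift_eq_some.2 (add_zero _).symm

lemma inIN_maxShift (z : ℤ) : InIN (maxShift z) := by
  refine ⟨fun m n a hm hn => ?_, (finite_setOf_coe_le (-z)).subset fun n hn => ?_,
    (finite_setOf_coe_le z).subset fun m hm => ?_, fun m n a b hm hn => ?_⟩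
  · have := maxShift_eq_some.1 hm
    have := maxShift_eq_some.1 hn
    exact PNat.coe_injective (by omega)
  · have := mem_pdom_maxShift.not.1 hn
    show ((n : ℕ) : ℤ) ≤ -z
    omega
  · have := mem_pran_maxShift.not.1 hm
    show ((m : ℕ) : ℤ) ≤ z
    omega
  · rw [maxShift_eq_some.1 hm, maxShift_eq_some.1 hn, add_sub_add_right_eq_sub]

/-- A point of `dom (maxShift z) \ dom f` is sent outside `ran f`, since the translation is
injective. -/
lemma HasShift.pmul_pidOn_pran_maxShift {f : PMapN} (h : HasShift f z) :
    pmul (pidOn (pran f)) (maxShift z) = f := by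
  funext n
  cases hfn : f n with
  | some a => simp [pmul, h.maxShift_eq hfn, pidOn_of_mem (show a ∈ pran f from ⟨n, hfn⟩)]
  | none =>
    cases hn : maxShift z n with
    | none => simp [pmul, hn]
    | some a =>
      have ha : a ∉ pran f := by
        rintro ⟨k, hk⟩
        have := h k a hk
        have := maxShift_eq_some.1 hn
        obtain rfl : k = n := PNat.coe_injective (by omega)
        simp [hfn] at hk
      simp [pmul, hn, pidOn_of_notMem ha]

lemma HasShift.eq_pmul_maxShift_pidOn_pdom {f : PMapN} (h : HasShift f z) :
    f = pmul (maxShift z) (pidOn (pdom f)) := by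
  funext n
  cases hfn : f n with
  | none => simp [pmul, pidOn_of_notMem (show n ∉ pdom f from fun h => h hfn)]
  | some b =>
    have hn : n ∈ pdom f := by simp [pdom, hfn]
    simp [pmul, pidOn_of_mem hn, h.maxShift_eq hfn]

end MaxShift

lemma HasShift.cmg_maxShift {α : PMapN} {z : ℤ} (hα : InIN α) (h : HasShift α z) :
    Cmg α (maxShift z) :=
  ⟨_, inIN_pidOn hα.2.2.1, pmul_pidOn_self _,
    (pmul_pidOn_pran α).trans h.pmul_pidOn_pran_maxShift.symm⟩

lemma HasShift.natLe_maxShift {β : PMapN} {z : ℤ} (hβ : InIN β) (h : HasShift β z) :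
    NatLe β (maxShift z) :=
  ⟨_, inIN_pidOn hβ.2.1, pmul_pidOn_self _, h.eq_pmul_maxShift_pidOn_pdom⟩

lemma Cmg.hasShift {α β : PMapN} {z : ℤ} (hα : InIN α) (hz : HasShift α z)
    (hβ : IsIsometry β) (h : Cmg α β) : HasShift β z := by
  have hagree := (h.compl_setOf_agree_finite hα).infinite_compl
  rw [compl_compl] at hagree
  exact hβ.hasShift_of_nontrivial hagree.nontrivial
    fun n ⟨a, hαn, hβn⟩ => ⟨a, hβn, hz n a hαn⟩

/-- `𝐈ℕ∞` is an F-inverse semigroup: for every `α ∈ 𝐈ℕ∞` (with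
translation integer `z`, i.e. `α(n) = n + z` on `dom α`) the `𝔠_mg`-class of `α` has a
greatest element w.r.t. the natural partial order `≼`, namely the maximal-domain partial
isometry `α_m = maxShift z`: if `z < 0` it has domain `{n : n ≥ -z + 1}` and range ℕ,
if `z = 0` it is the identity `𝕀`, and if `z > 0` it has domain ℕ and range
`{n : n ≥ z + 1}`; in each case `α_m(n) = n + z`. -/
theorem stmt14 (α : PMapN) (hα : InIN α) (z : ℤ)
    (hz : ∀ n a, α n = some a → ((a : ℕ) : ℤ) = ((n : ℕ) : ℤ) + z) :
    InIN (maxShift z) ∧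
    (∀ n a, maxShift z n = some a → ((a : ℕ) : ℤ) = ((n : ℕ) : ℤ) + z) ∧
    (z = 0 → maxShift z = pid) ∧
    (z < 0 → pdom (maxShift z) = {n : ℕ+ | -z + 1 ≤ ((n : ℕ) : ℤ)} ∧
      pran (maxShift z) = Set.univ) ∧
    (0 < z → pdom (maxShift z) = Set.univ ∧
      pran (maxShift z) = {n : ℕ+ | z + 1 ≤ ((n : ℕ) : ℤ)}) ∧
    Cmg α (maxShift z) ∧
    (∀ β, InIN β → Cmg α β → NatLe β (maxShift z)) := by
  refine ⟨inIN_maxShift z, hasShift_maxShift z, fun h => h ▸ maxShift_zero, fun h => ?_,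
    fun h => ?_, HasShift.cmg_maxShift hα hz,
    fun β hβ hαβ => (hαβ.hasShift hα hz hβ.2.2.2).natLe_maxShift hβ⟩
  all_goals
    constructor <;> ext n <;> have := n.pos <;>
      simp only [mem_pdom_maxShift, mem_pran_maxShift, Set.mem_ofPred_eq, Set.mem_univ,
        iff_true] <;>
      omega
end

section
/- The map 𝔥 : 𝐈ℕ∞ → 𝐈ℕ∞ sending each η ∈ 𝐈ℕ∞ to the restriction of η to the tail { n ∈ ℕ : n ≥ n_η^d }, where n_η^d is the least positive integer such that every n ≥ n_η^d lies in dom η, is a monoid homomorphism whose image is the submonoid 𝒞_ℕ; in particular 𝔥 is a surjective homomorphism onto 𝒞_ℕ that fixes every element of 𝒞_ℕ, so 𝒞_ℕ is a homomorphic retract of 𝐈ℕ∞. -/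
/-- The partial translation `α₀ : n ↦ n + 1` with domain ℕ. -/
def alpha0 : PMapN := fun n => some (n + 1)

/-- The partial translation `β₀ : n ↦ n - 1` with domain `ℕ \ {1}`. -/
def beta0 : PMapN := fun n => if n = 1 then none else some (n - 1)

/-- Membership in the submonoid `𝒞_ℕ` of `𝐈ℕ∞` generated by `α₀` and `β₀`
(isomorphic to the bicyclic monoid). -/
inductive InC : PMapN → Prop
  | one : InC pid
  | base_a : InC alpha0
  | base_b : InC beta0
  | mul : ∀ f g, InC f → InC g → InC (pmul f g)

/-- The retraction `𝔥 : 𝐈ℕ∞ → 𝒞_ℕ` sending `η` to its restriction to the tail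
`{n : n ≥ n_η^d}`, where `n_η^d` is the least number such that every `n ≥ n_η^d`
lies in `dom η`. -/
noncomputable def hmap (η : PMapN) : PMapN := fun n =>
  if sInf {N : ℕ | ∀ m : ℕ+, N ≤ (m : ℕ) → η m ≠ none} ≤ (n : ℕ) then η n else none

/-! An isometry between cofinite subsets of ℕ cannot reverse orientation, since its domain
contains points far beyond everything else; so every `η ∈ 𝐈ℕ∞` is a translation on its domain.
Hence `𝔥 η` is that translation restricted to the largest tail `[N, ∞)` inside `dom η`, a map
`α₀ʲ β₀ⁱ`; these tail shifts are exactly the elements of `𝒞_ℕ`, and `𝔥` fixes them. `𝔥` is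
multiplicative because `μ` moves tails onto tails: the tail from `n` lies in `dom (η μ)` iff the
tail from `n` lies in `dom μ` and the tail from `μ n` lies in `dom η`. -/

theorem exists_Ici_subset_pdom {f : PMapN} (hf : (pdom f)ᶜ.Finite) :
    ∃ N : ℕ+, Set.Ici N ⊆ pdom f := by
  obtain ⟨B, hB⟩ := hf.bddAbove
  refine ⟨B + 1, fun n hn => ?_⟩
  by_contra hnot
  have := hB hnot
  rw [Set.mem_Ici, ← PNat.coe_le_coe, PNat.add_coe, PNat.one_coe] at hn
  rw [← PNat.coe_le_coe] at this
  omega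

def IsTranslation (f : PMapN) : Prop :=
  ∀ ⦃m n a b : ℕ+⦄, f m = some a → f n = some b → (a : ℕ) + n = b + m

/-- Compare both points with one far-out point `q` of the domain: its image lies above
`a` and `b`, so the distances are preserved without a change of sign. -/
theorem IsIsometry.isTranslation {f : PMapN} (hf : IsIsometry f) (hdom : (pdom f)ᶜ.Finite) :
    IsTranslation f := by
  intro m n a b hm hn
  obtain ⟨N, hN⟩ := exists_Ici_subset_pdom hdom
  set q : ℕ+ := N + m + n + a + b
  have hq : (q : ℕ) = N + m + n + a + b := by simp [q]
  obtain ⟨r, hr⟩ := Option.ne_none_iff_exists'.mp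
    (hN (by rw [Set.mem_Ici, ← PNat.coe_le_coe, hq]; omega))
  have hqm := abs_eq_abs.mp (hf hr hm)
  have hqn := abs_eq_abs.mp (hf hr hn)
  have := r.pos
  omega

open Classical in
theorem hmap_apply {f : PMapN} (hf : (pdom f)ᶜ.Finite) (n : ℕ+) :
    hmap f n = if Set.Ici n ⊆ pdom f then f n else none := by
  set T := {N : ℕ | ∀ m : ℕ+, N ≤ (m : ℕ) → f m ≠ none}
  have hT : T.Nonempty := by
    obtain ⟨N, hN⟩ := exists_Ici_subset_pdom hf
    exact ⟨N, fun m hm => hN (PNat.coe_le_coe _ _ |>.mp hm)⟩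
  have hiff : sInf T ≤ (n : ℕ) ↔ Set.Ici n ⊆ pdom f :=
    ⟨fun h m hm => Nat.sInf_mem hT m (h.trans (PNat.coe_le_coe _ _ |>.mpr hm)),
      fun h => Nat.sInf_le fun m hm => h (PNat.coe_le_coe _ _ |>.mp hm)⟩
  exact if_congr hiff rfl rfl

theorem exists_isLeast_Ici_subset_pdom {f : PMapN} (hf : (pdom f)ᶜ.Finite) :
    ∃ N : ℕ+, IsLeast {M : ℕ+ | Set.Ici M ⊆ pdom f} N := by
  obtain ⟨N, hN, hmin⟩ := wellFounded_lt.has_min _ (exists_Ici_subset_pdom hf)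
  exact ⟨N, hN, fun M hM => not_lt.mp (hmin M hM)⟩

theorem hmap_eq_of_isLeast {f : PMapN} (hf : (pdom f)ᶜ.Finite) {N : ℕ+}
    (hN : IsLeast {M : ℕ+ | Set.Ici M ⊆ pdom f} N) :
    hmap f = fun n : ℕ+ => if (N : ℕ) ≤ (n : ℕ) then f n else none := by
  classical
  funext n
  rw [hmap_apply hf]
  refine if_congr ⟨fun h => (PNat.coe_le_coe _ _).mpr (hN.2 h), fun h => ?_⟩ rfl rfl
  exact (Set.Ici_subset_Ici.mpr ((PNat.coe_le_coe _ _).mp h)).trans hN.1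

theorem pdom_pmul_compl_finite {f g : PMapN} (hf : (pdom f)ᶜ.Finite) (hg : (pdom g)ᶜ.Finite)
    (hg_inj : IsPartialBij g) : (pdom (pmul f g))ᶜ.Finite := by
  have hpre : (g ⁻¹' (some '' (pdom f)ᶜ)).Finite :=
    (hf.image some).preimage fun m hm n _ hmn => by
      obtain ⟨a, -, ha⟩ := hm
      exact hg_inj ha.symm (hmn.symm.trans ha.symm)
  refine (hg.union hpre).subset fun n hn => ?_
  cases hgn : g n with
  | none => exact Or.inl (by simp [pdom, hgn])
  | some p => exact Or.inr ⟨p, by simpa [pdom, pmul, hgn] using hn, hgn.symm⟩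

theorem Ici_subset_pdom_pmul_iff {f g : PMapN} (hg : IsTranslation g) {n p : ℕ+}
    (hp : g n = some p) :
    Set.Ici n ⊆ pdom (pmul f g) ↔ Set.Ici n ⊆ pdom g ∧ Set.Ici p ⊆ pdom f := by
  constructor
  · intro h
    have hg_dom : Set.Ici n ⊆ pdom g := fun m hm hgm => h hm (by simp [pmul, hgm])
    refine ⟨hg_dom, fun m' hm' => ?_⟩
    rw [Set.mem_Ici, ← PNat.coe_le_coe] at hm'
    set m : ℕ+ := ⟨(m' : ℕ) + n - p, by have := n.pos; omega⟩
    have hnm : n ≤ m := by rw [← PNat.coe_le_coe]; simp only [m, PNat.mk_coe]; omega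
    obtain ⟨q, hq⟩ := Option.ne_none_iff_exists'.mp (hg_dom hnm)
    have hqm : q = m' := by
      have := hg hp hq
      apply PNat.coe_injective; simp only [m, PNat.mk_coe] at this; omega
    have := h hnm
    simpa [pdom, pmul, hq, hqm] using this
  · rintro ⟨hg_dom, hf_dom⟩ m hm
    obtain ⟨q, hq⟩ := Option.ne_none_iff_exists'.mp (hg_dom hm)
    have hpq : p ≤ q := by
      have := hg hp hq
      rw [Set.mem_Ici, ← PNat.coe_le_coe] at hm
      rw [← PNat.coe_le_coe]; omega
    simpa [pdom, pmul, hq] using hf_dom hpq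

theorem hmap_pmul {f g : PMapN} (hf : InIN f) (hg : InIN g) :
    hmap (pmul f g) = pmul (hmap f) (hmap g) := by
  classical
  funext n
  rw [hmap_apply (pdom_pmul_compl_finite hf.2.1 hg.2.1 hg.1)]
  cases hgn : g n with
  | none => simp [pmul, hmap_apply hg.2.1, hgn]
  | some p =>
    rw [Ici_subset_pdom_pmul_iff (hg.2.2.2.isTranslation hg.2.1) hgn]
    simp only [pmul, hmap_apply hg.2.1, hmap_apply hf.2.1, hgn]
    by_cases hn : Set.Ici n ⊆ pdom g <;> by_cases hp : Set.Ici p ⊆ pdom f <;> simp [hn, hp]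

/-- `f = α₀ʲ β₀ⁱ`, the translation `n ↦ n - i + j` on `{n > i}`: the normal form of an
element of the bicyclic monoid. -/
structure IsTailShift (i j : ℕ) (f : PMapN) : Prop where
  eq_none : ∀ n : ℕ+, (n : ℕ) ≤ i → f n = none
  exists_eq_some : ∀ n : ℕ+, i < (n : ℕ) → ∃ p : ℕ+, f n = some p ∧ (p : ℕ) + i = n + j

section IsTailShift

variable {i j : ℕ} {f : PMapN}

theorem IsTailShift.of_eq_some (hf : IsTailShift i j f) {n p : ℕ+} (h : f n = some p) :
    i < n ∧ (p : ℕ) + i = n + j := by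
  by_cases hn : (n : ℕ) ≤ i
  · simp [hf.eq_none n hn] at h
  · obtain ⟨q, hq, hqn⟩ := hf.exists_eq_some n (by omega)
    obtain rfl : q = p := Option.some_injective _ (hq.symm.trans h)
    exact ⟨by omega, hqn⟩

theorem isTailShift_pid : IsTailShift 0 0 pid :=
  ⟨fun n hn => absurd hn (by simp), fun n _ => ⟨n, rfl, rfl⟩⟩

theorem isTailShift_alpha0 : IsTailShift 0 1 alpha0 :=
  ⟨fun n hn => absurd hn (by simp), fun n _ => ⟨n + 1, rfl, by simp⟩⟩

theorem isTailShift_beta0 : IsTailShift 1 0 beta0 := by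
  refine ⟨fun n hn => ?_, fun n hn => ?_⟩
  · simp [beta0, PNat.coe_eq_one_iff.mp (le_antisymm hn n.pos)]
  · have hn1 : n ≠ 1 := by rintro rfl; simp at hn
    refine ⟨n - 1, if_neg hn1, ?_⟩
    rw [PNat.sub_coe, if_pos (by exact_mod_cast hn), PNat.one_coe]
    omega

theorem IsTailShift.pmul {i₁ j₁ i₂ j₂ : ℕ} {g : PMapN} (hf : IsTailShift i₁ j₁ f)
    (hg : IsTailShift i₂ j₂ g) : IsTailShift (i₂ + (i₁ - j₂)) (j₁ + (j₂ - i₁)) (pmul f g) := by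
  refine ⟨fun n hn => ?_, fun n hn => ?_⟩
  · by_cases hn₂ : (n : ℕ) ≤ i₂
    · simp [_root_.pmul, hg.eq_none n hn₂]
    · obtain ⟨p, hp, hpn⟩ := hg.exists_eq_some n (by omega)
      simp [_root_.pmul, hp, hf.eq_none p (by omega)]
  · obtain ⟨p, hp, hpn⟩ := hg.exists_eq_some n (by omega)
    obtain ⟨q, hq, hqp⟩ := hf.exists_eq_some p (by omega)
    exact ⟨q, by simp [_root_.pmul, hp, hq], by omega⟩

theorem IsTailShift.unique {g : PMapN} (hf : IsTailShift i j f)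
    (hg : IsTailShift i j g) : f = g := by
  funext n
  by_cases hn : (n : ℕ) ≤ i
  · rw [hf.eq_none n hn, hg.eq_none n hn]
  · obtain ⟨p, hp, hpn⟩ := hf.exists_eq_some n (by omega)
    obtain ⟨q, hq, hqn⟩ := hg.exists_eq_some n (by omega)
    rw [hp, hq, PNat.coe_injective (show (p : ℕ) = q by omega)]

def ppow (f : PMapN) : ℕ → PMapN
  | 0 => pid
  | k + 1 => pmul f (ppow f k)

theorem inC_ppow (hf : InC f) (k : ℕ) : InC (ppow f k) := by
  induction k with
  | zero => exact InC.one
  | succ k ih => exact InC.mul _ _ hf ih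

theorem isTailShift_ppow_alpha0 (j : ℕ) : IsTailShift 0 j (ppow alpha0 j) := by
  induction j with
  | zero => exact isTailShift_pid
  | succ j ih => simpa [ppow, add_comm] using isTailShift_alpha0.pmul ih

theorem isTailShift_ppow_beta0 (i : ℕ) : IsTailShift i 0 (ppow beta0 i) := by
  induction i with
  | zero => exact isTailShift_pid
  | succ i ih => simpa [ppow, add_comm] using isTailShift_beta0.pmul ih

theorem IsTailShift.inC (hf : IsTailShift i j f) : InC f := by
  have h := (isTailShift_ppow_alpha0 j).pmul (isTailShift_ppow_beta0 i)
  simp only [Nat.zero_sub, add_zero] at h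
  rw [hf.unique h]
  exact InC.mul _ _ (inC_ppow InC.base_a j) (inC_ppow InC.base_b i)

theorem InC.exists_isTailShift (hf : InC f) : ∃ i j, IsTailShift i j f := by
  induction hf with
  | one => exact ⟨0, 0, isTailShift_pid⟩
  | base_a => exact ⟨0, 1, isTailShift_alpha0⟩
  | base_b => exact ⟨1, 0, isTailShift_beta0⟩
  | mul f g _ _ ihf ihg =>
    obtain ⟨i₁, j₁, hf⟩ := ihf
    obtain ⟨i₂, j₂, hg⟩ := ihg
    exact ⟨_, _, hf.pmul hg⟩

theorem IsTailShift.inIN (hf : IsTailShift i j f) : InIN f := by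
  have hfin : ∀ k : ℕ, {n : ℕ+ | (n : ℕ) ≤ k}.Finite := fun k =>
    (Set.finite_Iic k).preimage PNat.coe_injective.injOn
  refine ⟨fun m n a hm hn => ?_, (hfin i).subset fun n hn => ?_,
    (hfin j).subset fun m hm => ?_, fun m n a b hm hn => ?_⟩
  · have := hf.of_eq_some hm
    have := hf.of_eq_some hn
    exact PNat.coe_injective (by omega)
  · by_contra hlt
    obtain ⟨p, hp, -⟩ := hf.exists_eq_some n (by simpa using hlt)
    exact hn (by simp [pdom, hp])
  · by_contra hlt
    replace hlt : j < (m : ℕ) := by simpa using hlt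
    obtain ⟨p, hp, hpn⟩ := hf.exists_eq_some ⟨m + i - j, by omega⟩
      (by simp only [PNat.mk_coe]; omega)
    refine hm ⟨_, hp.trans (congrArg some (PNat.coe_injective ?_))⟩
    simp only [PNat.mk_coe] at hpn
    omega
  · have := hf.of_eq_some hm
    have := hf.of_eq_some hn
    rw [show ((a : ℕ) : ℤ) - b = (m : ℕ) - (n : ℕ) by omega]

theorem IsTailShift.hmap_eq (hf : IsTailShift i j f) : hmap f = f := by
  classical
  funext n
  rw [hmap_apply hf.inIN.2.1, ite_eq_left_iff]
  intro hn
  by_contra hfn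
  obtain ⟨p, hp⟩ := Option.ne_none_iff_exists'.mp (Ne.symm hfn)
  refine hn fun m hm => ?_
  obtain ⟨q, hq, -⟩ := hf.exists_eq_some m
    (lt_of_lt_of_le (hf.of_eq_some hp).1 ((PNat.coe_le_coe _ _).mpr hm))
  simp [pdom, hq]

theorem IsTranslation.exists_isTailShift_restrict (hf : IsTranslation f) {N : ℕ+}
    (hN : Set.Ici N ⊆ pdom f) :
    ∃ i j, IsTailShift i j (fun n : ℕ+ => if (N : ℕ) ≤ (n : ℕ) then f n else none) := by
  obtain ⟨P, hP⟩ := Option.ne_none_iff_exists'.mp (hN (Set.mem_Ici.mpr le_rfl))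
  refine ⟨(N : ℕ) - 1, (P : ℕ) - 1,
    ⟨fun n hn => if_neg (by have := n.pos; omega), fun n hn => ?_⟩⟩
  obtain ⟨p, hp⟩ := Option.ne_none_iff_exists'.mp
    (hN (show N ≤ n by rw [← PNat.coe_le_coe]; omega))
  refine ⟨p, by rw [if_pos (by omega), hp], ?_⟩
  have := hf hp hP
  have := N.pos
  have := P.pos
  omega

theorem exists_isTailShift_hmap (hf : InIN f) : ∃ i j, IsTailShift i j (hmap f) := by
  obtain ⟨N, hN⟩ := exists_isLeast_Ici_subset_pdom hf.2.1
  rw [hmap_eq_of_isLeast hf.2.1 hN]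
  exact (hf.2.2.2.isTranslation hf.2.1).exists_isTailShift_restrict hN.1

end IsTailShift

/-- The map `𝔥 : 𝐈ℕ∞ → 𝐈ℕ∞`, sending each `η` to its restriction to
the tail `{n : n ≥ n_η^d}` where `n_η^d` is least such that every `n ≥ n_η^d` lies in
`dom η`, is a monoid homomorphism whose image is the submonoid `𝒞_ℕ`; it fixes every
element of `𝒞_ℕ` (and only those), so `𝒞_ℕ` is a homomorphic retract of `𝐈ℕ∞`. -/
theorem stmt15 :
    (∀ η, InIN η → ∃ N : ℕ+,
        (∀ n : ℕ+, N ≤ n → η n ≠ none) ∧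
        (∀ M : ℕ+, (∀ n : ℕ+, M ≤ n → η n ≠ none) → N ≤ M) ∧
        hmap η = fun (n : ℕ+) => if (N : ℕ) ≤ (n : ℕ) then η n else none) ∧
    (∀ η μ, InIN η → InIN μ → hmap (pmul η μ) = pmul (hmap η) (hmap μ)) ∧
    (hmap pid = pid) ∧
    (∀ η, InIN η → InIN (hmap η) ∧ InC (hmap η)) ∧
    (∀ f, InC f → hmap f = f) ∧
    (∀ η, InIN η → hmap η = η → InC η) := by
  refine ⟨fun η hη => ?_, fun η μ hη hμ => hmap_pmul hη hμ, isTailShift_pid.hmap_eq,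
    fun η hη => ?_, fun f hf => ?_, fun η hη hfix => ?_⟩
  · obtain ⟨N, hN⟩ := exists_isLeast_Ici_subset_pdom hη.2.1
    exact ⟨N, hN.1, hN.2, hmap_eq_of_isLeast hη.2.1 hN⟩
  · obtain ⟨i, j, h⟩ := exists_isTailShift_hmap hη
    exact ⟨h.inIN, h.inC⟩
  · obtain ⟨i, j, h⟩ := hf.exists_isTailShift
    exact h.hmap_eq
  · obtain ⟨i, j, h⟩ := exists_isTailShift_hmap hη
    exact hfix ▸ h.inC
end
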